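/- arXiv:2201.03129 — 2 statements merged into one kernel-verified Lean document; each statement's English description precedes it below -/
import Mathlib

section
/- Frobenius's identity: for n ≥ 1, a parameter c, and commuting variables u_i, v_j, det((1 − c u_i v_j)/(1 − u_i v_j))_{i,j=1}^n = V(u) V(v) (1−c)^{n−1} [ Σ_{m : m_n = 0} s_m(u) s_m(v) + (1−c) Σ_{m : m_n > 0} s_m(u) s_m(v) ], with both sums over partitions m = (m_1 ≥ ... ≥ m_n ≥ 0) with at most n parts. -/
/-!
Modulo the power series whose coefficients vanish at every exponent `≤ d`, the geometric series
`(1 - c x) / (1 - x) = ∑ w_k x ^ k` (`w_0 = 1`, `w_k = 1 - c` for `k > 0`) may be cut off at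
`x ^ N`, `N` the total degree of `d`. The kernel matrix then becomes the product `U V` with
`U i k = w_k u_i ^ k` and `V k j = v_j ^ k`, `k ≤ N`. Cauchy–Binet expands `det (U V)` over
strictly decreasing exponent tuples `M` as `∏ w_{M_i} · det (u_j ^ M_i) · det (v_j ^ M_i)`, and
`∏ w_{M_i} = (1 - c)^(n-1) w_{M_n}` because only the last entry of `M` can vanish. Finally
`M_i = m_i + n - i` turns these tuples into partitions `m`; the tuples with an entry above `N`
do not contribute at `d`.
-/

open scoped Classical

open Finset Matrix Equiv

namespace Matrix

variable {R : Type*} [CommRing R] {m : Type*} [Fintype m] [DecidableEq m]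

theorem det_sub_det_mem (I : Ideal R) {A A' : Matrix m m R} (h : ∀ i j, A i j - A' i j ∈ I) :
    A.det - A'.det ∈ I := by
  rw [← Ideal.Quotient.eq, RingHom.map_det, RingHom.map_det]
  congr 1
  ext i j
  exact Ideal.Quotient.eq.mpr (h i j)

theorem det_mem_of_row_mem (I : Ideal R) {A : Matrix m m R} (i : m) (h : ∀ j, A i j ∈ I) :
    A.det ∈ I := by
  rw [← Ideal.Quotient.eq_zero_iff_mem, RingHom.map_det]
  exact det_eq_zero_of_row_eq_zero i fun j => Ideal.Quotient.eq_zero_iff_mem.mpr (h j)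

theorem det_mul_eq_sum_det_submatrix_mul_prod {κ : Type*} [Fintype κ] (A : Matrix m κ R)
    (B : Matrix κ m R) :
    (A * B).det = ∑ p : m → κ, (A.submatrix id p).det * ∏ i, B (p i) i := by
  simp only [det_apply', mul_apply, prod_univ_sum, mul_sum, Fintype.piFinset_univ,
    submatrix_apply, id, sum_mul, prod_mul_distrib]
  rw [Finset.sum_comm]
  refine sum_congr rfl fun p _ => sum_congr rfl fun σ _ => ?_
  ring

end Matrix

theorem Fintype.sum_injective_eq_sum_strictAnti_sum_perm {n : ℕ} {κ A : Type*} [LinearOrder κ]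
    [Fintype κ] [AddCommMonoid A] (f : (Fin n → κ) → A) :
    ∑ p : {p : Fin n → κ // Function.Injective p}, f p =
      ∑ M : {M : Fin n → κ // StrictAnti M}, ∑ σ : Perm (Fin n), f (M ∘ σ) := by
  rw [← Fintype.sum_prod_type']
  let e : {M : Fin n → κ // StrictAnti M} × Perm (Fin n) →
      {p : Fin n → κ // Function.Injective p} :=
    fun q => ⟨q.1.1 ∘ q.2, q.1.2.injective.comp q.2.injective⟩
  refine (Fintype.sum_bijective e ⟨?_, ?_⟩ _ _ fun _ => rfl).symm
  · rintro ⟨⟨M₁, hM₁⟩, σ₁⟩ ⟨⟨M₂, hM₂⟩, σ₂⟩ h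
    have hcomp : M₁ ∘ σ₁ = M₂ ∘ σ₂ := congrArg Subtype.val h
    obtain rfl : M₁ = M₂ := by
      rw [← hM₁.range_inj hM₂, ← EquivLike.range_comp M₁ σ₁, hcomp, EquivLike.range_comp]
    obtain rfl : σ₁ = σ₂ := Equiv.ext fun x => hM₁.injective (congrFun hcomp x)
    rfl
  · rintro ⟨p, hp⟩
    let π : Perm (Fin n) := Fin.revPerm.trans (Tuple.sort p)
    have hπ : StrictAnti (p ∘ π) :=
      ((Tuple.monotone_sort p).comp_antitone Fin.rev_anti).strictAnti_of_injective
        (hp.comp π.injective)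
    exact ⟨(⟨p ∘ π, hπ⟩, π.symm), Subtype.ext (by ext x; simp [e])⟩

namespace Matrix

variable {R : Type*} [CommRing R]

-- The Cauchy–Binet formula, with the column sets listed in decreasing order.
theorem det_mul_eq_sum_strictAnti {n : ℕ} {κ : Type*} [LinearOrder κ] [Fintype κ]
    (A : Matrix (Fin n) κ R) (B : Matrix κ (Fin n) R) :
    (A * B).det =
      ∑ M : {M : Fin n → κ // StrictAnti M}, (A.submatrix id M).det * (B.submatrix M id).det := by
  have hinj : ∀ p : Fin n → κ, ¬ Function.Injective p → (A.submatrix id p).det = 0 := by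
    intro p hp
    obtain ⟨i, j, hij, hne⟩ := Function.not_injective_iff.mp hp
    exact det_zero_of_column_eq hne fun k => by simp [hij]
  rw [det_mul_eq_sum_det_submatrix_mul_prod,
    ← sum_subset (subset_univ (univ.filter Function.Injective))
      (fun p _ hp => by rw [hinj p (by simpa using hp), zero_mul]),
    sum_subtype _ (fun p => mem_filter_univ p),
    Fintype.sum_injective_eq_sum_strictAnti_sum_perm
      fun p => (A.submatrix id p).det * ∏ i, B (p i) i]
  refine sum_congr rfl fun M _ => ?_
  rw [det_apply' (B.submatrix M.1 id), mul_sum]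
  refine sum_congr rfl fun σ _ => ?_
  rw [show A.submatrix id (M.1 ∘ σ) = (A.submatrix id M.1).submatrix id σ from rfl, det_permute']
  simp only [submatrix_apply, id, Function.comp_apply]
  ring

end Matrix

namespace MvPowerSeries

variable {σ R : Type*} [CommRing R]

noncomputable def lowCoeffIdeal (d : σ →₀ ℕ) : Ideal (MvPowerSeries σ R) :=
  TwoSidedIdeal.asIdeal (LinearTopology.basis σ R (⊥, d))

theorem mem_lowCoeffIdeal {d : σ →₀ ℕ} {f : MvPowerSeries σ R} :
    f ∈ lowCoeffIdeal d ↔ ∀ e ≤ d, coeff e f = 0 := by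
  simp [lowCoeffIdeal, LinearTopology.mem_basis_iff, TwoSidedIdeal.mem_bot]

theorem coeff_eq_zero_of_mem_lowCoeffIdeal {d : σ →₀ ℕ} {f : MvPowerSeries σ R}
    (h : f ∈ lowCoeffIdeal d) : coeff d f = 0 :=
  mem_lowCoeffIdeal.mp h d le_rfl

theorem coeff_eq_of_sub_mem_lowCoeffIdeal {d : σ →₀ ℕ} {f g : MvPowerSeries σ R}
    (h : f - g ∈ lowCoeffIdeal d) : coeff d f = coeff d g := by
  rw [← sub_eq_zero, ← map_sub, coeff_eq_zero_of_mem_lowCoeffIdeal h]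

theorem X_pow_mem_lowCoeffIdeal {d : σ →₀ ℕ} (s : σ) {k : ℕ} (hk : d.degree < k) :
    (X s ^ k : MvPowerSeries σ R) ∈ lowCoeffIdeal d := by
  refine mem_lowCoeffIdeal.mpr fun e he => ?_
  rw [coeff_X_pow, if_neg]
  rintro rfl
  have := Finsupp.degree_mono he
  simp only [Finsupp.degree_single] at this
  omega

end MvPowerSeries

section FrobeniusKernel

variable {R : Type*} [CommRing R]

-- The coefficient of `x ^ k` in `(1 - c x) / (1 - x)`.
def frobeniusCoeff (c : R) (k : ℕ) : R := if k = 0 then 1 else 1 - c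

theorem sum_frobeniusCoeff_mul_one_sub (c x : R) (N : ℕ) :
    (∑ k ∈ range (N + 1), frobeniusCoeff c k * x ^ k) * (1 - x) =
      1 - c * x - (1 - c) * x ^ (N + 1) := by
  induction N with
  | zero => simp [frobeniusCoeff]; ring
  | succ N ih =>
    rw [sum_range_succ, add_mul, ih, frobeniusCoeff, if_neg N.succ_ne_zero]
    ring

theorem sub_sum_frobeniusCoeff_mem (I : Ideal R) {b c x : R} (N : ℕ) (hx : IsUnit (1 - x))
    (hb : b * (1 - x) = 1 - c * x) (hxN : x ^ (N + 1) ∈ I) :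
    b - ∑ k ∈ range (N + 1), frobeniusCoeff c k * x ^ k ∈ I := by
  rw [← Ideal.mul_unit_mem_iff_mem I hx, sub_mul, hb, sum_frobeniusCoeff_mul_one_sub]
  simpa using I.mul_mem_left (1 - c) hxN

theorem prod_frobeniusCoeff_of_strictAnti {n : ℕ} (c : R) {M : Fin (n + 1) → ℕ}
    (hM : StrictAnti M) :
    ∏ i, frobeniusCoeff c (M i) = (1 - c) ^ n * frobeniusCoeff c (M (Fin.last n)) := by
  rw [Fin.prod_univ_castSucc]
  congr 1
  rw [prod_eq_pow_card (b := 1 - c) fun i _ => ?_, card_univ, Fintype.card_fin]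
  exact if_neg (Nat.ne_zero_of_lt (hM (Fin.castSucc_lt_last i)))

def frobeniusKernelTrunc {n : ℕ} (c : R) (u v : Fin n → R) (N : ℕ) : Matrix (Fin n) (Fin n) R :=
  of fun i j => ∑ k ∈ range (N + 1), frobeniusCoeff c k * (u i * v j) ^ k

theorem det_frobeniusKernelTrunc {n : ℕ} (c : R) (u v : Fin (n + 1) → R) (N : ℕ) :
    (frobeniusKernelTrunc c u v N).det =
      ∑ M : {M : Fin (n + 1) → Fin (N + 1) // StrictAnti M},
        (1 - c) ^ n * frobeniusCoeff c (M.1 (Fin.last n)) *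
          ((of fun i j => u j ^ (M.1 i : ℕ)).det * (of fun i j => v j ^ (M.1 i : ℕ)).det) := by
  have hfactor : frobeniusKernelTrunc c u v N =
      (of fun i (k : Fin (N + 1)) => frobeniusCoeff c k * u i ^ (k : ℕ)) *
        of fun (k : Fin (N + 1)) j => v j ^ (k : ℕ) := by
    ext i j
    rw [mul_apply, frobeniusKernelTrunc, of_apply, ← Fin.sum_univ_eq_sum_range]
    simp only [of_apply, mul_pow, mul_assoc]
  rw [hfactor, det_mul_eq_sum_strictAnti]
  refine sum_congr rfl fun M _ => ?_
  have hM : StrictAnti fun i => (M.1 i : ℕ) := Fin.val_strictMono.comp_strictAnti M.2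
  rw [← prod_frobeniusCoeff_of_strictAnti c hM, ← det_transpose (of fun i j => u j ^ _),
    ← mul_assoc, ← det_mul_row]
  rfl

theorem sum_ite_add_one_sub_mul_sum_ite {ι : Type*} [Fintype ι] (c : R) (P : ι → Prop)
    [DecidablePred P] (f : ι → ℕ) (T : ι → R) :
    (∑ x, if P x ∧ f x = 0 then T x else 0) + (1 - c) * ∑ x, (if P x ∧ 0 < f x then T x else 0) =
      ∑ x, if P x then frobeniusCoeff c (f x) * T x else 0 := by
  rw [mul_sum, ← sum_add_distrib]
  refine sum_congr rfl fun x _ => ?_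
  by_cases hP : P x <;> by_cases hf : f x = 0 <;> simp [hP, hf, frobeniusCoeff, Nat.pos_of_ne_zero]

end FrobeniusKernel

theorem StrictAnti.apply_add_sub_le {n : ℕ} {M : Fin n → ℕ} (hM : StrictAnti M) {a b : Fin n}
    (hab : a ≤ b) : M b + (b - a : ℕ) ≤ M a := by
  obtain ⟨k, hk⟩ := Nat.exists_eq_add_of_le (Fin.le_def.mp hab)
  induction k generalizing b with
  | zero => obtain rfl := Fin.ext hk; simp
  | succ k ih =>
    have hb' : (a : ℕ) + k < n := by omega
    have h₁ := ih (b := ⟨a + k, hb'⟩) (Fin.le_def.mpr (by simp)) rfl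
    have h₂ := hM (show (⟨a + k, hb'⟩ : Fin n) < b from Fin.lt_def.mpr (by simp; omega))
    simp only at h₁
    omega

theorem StrictAnti.sub_le_apply {n : ℕ} {M : Fin n → ℕ} (hM : StrictAnti M) (i : Fin n) :
    n - 1 - i ≤ M i := by
  have := i.isLt
  have : M ⟨n - 1, by omega⟩ + (n - 1 - i) ≤ M i :=
    hM.apply_add_sub_le (Fin.le_def.mpr (by simp only; omega))
  omega

theorem StrictAnti.antitone_sub {n : ℕ} {M : Fin n → ℕ} (hM : StrictAnti M) :
    Antitone fun i : Fin n => M i - (n - 1 - i) := fun a b hab => by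
  dsimp only
  have : M b + (b - a : ℕ) ≤ M a := hM.apply_add_sub_le hab
  have := hM.sub_le_apply b
  have := b.isLt
  have : (a : ℕ) ≤ b := hab
  omega

theorem Antitone.strictAnti_add {n : ℕ} {m : Fin n → ℕ} (hm : Antitone m) :
    StrictAnti fun i : Fin n => m i + (n - 1 - i) := fun a b hab => by
  dsimp only
  have := hm hab.le
  have : (a : ℕ) < b := hab
  have := b.isLt
  omega

-- `m ↦ m + (n - 1 - ·)` matches antitone tuples with strictly antitone ones; the tuples it
-- misses on either side have an entry above `N`, where `φ` vanishes.
theorem sum_antitone_eq_sum_strictAnti {A : Type*} [AddCommMonoid A] {n N : ℕ}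
    (φ : (Fin n → ℕ) → A) (hφ : ∀ k i, N < k i → φ k = 0) :
    ∑ m : Fin n → Fin (N + 1),
        (if Antitone (fun i => (m i : ℕ)) then φ (fun i => m i + (n - 1 - i)) else 0) =
      ∑ M : {M : Fin n → Fin (N + 1) // StrictAnti M}, φ (fun i => M.1 i) := by
  have key : ∀ m : Fin n → Fin (N + 1),
      (if Antitone (fun i => (m i : ℕ)) then φ (fun i => m i + (n - 1 - i)) else 0) ≠ 0 →
        Antitone (fun i => (m i : ℕ)) ∧ ∀ i, (m i : ℕ) + (n - 1 - i) < N + 1 := by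
    intro m hm
    split_ifs at hm with hA
    · exact ⟨hA, fun i => Nat.lt_succ_of_le (not_lt.mp fun hi => hm (hφ _ i hi))⟩
    · exact absurd rfl hm
  refine sum_bij_ne_zero (fun m _ hm => ⟨fun i => ⟨m i + (n - 1 - i), (key m hm).2 i⟩,
      fun a b hab => Fin.lt_def.mpr ((key m hm).1.strictAnti_add hab)⟩)
    (fun _ _ _ => mem_univ _) ?_ ?_ ?_
  · intro m₁ _ _ m₂ _ _ h
    funext i
    have := congrArg (fun M => ((M.1 i : Fin (N + 1)) : ℕ)) h
    exact Fin.ext (by simpa using this)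
  · rintro ⟨M, hM⟩ _ hφM
    have hM' : StrictAnti fun i => (M i : ℕ) := Fin.val_strictMono.comp_strictAnti hM
    have hshift : ∀ i, (M i : ℕ) - (n - 1 - i) + (n - 1 - i) = M i :=
      fun i => Nat.sub_add_cancel (hM'.sub_le_apply i)
    refine ⟨fun i => ⟨M i - (n - 1 - i), by omega⟩, mem_univ _, ?_, ?_⟩
    · simpa only [if_pos hM'.antitone_sub, hshift] using hφM
    · exact Subtype.ext (funext fun i => Fin.ext (hshift i))
  · intro m _ hm
    rw [if_pos (key m hm).1]

namespace MvPowerSeries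

variable {σ R : Type*} [CommRing R]

theorem coeff_det_eq_coeff_det_frobeniusKernelTrunc {n : ℕ} (a b : Fin n → σ) (c : R)
    {B : Matrix (Fin n) (Fin n) (MvPowerSeries σ R)}
    (hB : ∀ i j, B i j * (1 - X (a i) * X (b j)) = 1 - C c * X (a i) * X (b j))
    (d : σ →₀ ℕ) :
    coeff d B.det =
      coeff d (frobeniusKernelTrunc (C c) (fun i => X (a i)) (fun j => X (b j)) d.degree).det := by
  refine coeff_eq_of_sub_mem_lowCoeffIdeal (det_sub_det_mem _ fun i j => ?_)
  refine sub_sum_frobeniusCoeff_mem _ _ ?_ (by rw [hB, mul_assoc]) ?_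
  · simp [isUnit_iff_constantCoeff]
  · rw [mul_pow]
    exact Ideal.mul_mem_right _ _ (X_pow_mem_lowCoeffIdeal _ (Nat.lt_succ_self _))

end MvPowerSeries

open MvPowerSeries

/-- Frobenius's determinant identity, in `(ℤ[c])[[u_1,…,u_n,v_1,…,v_n]]`: if
`B i j = (1 - c u_i v_j)/(1 - u_i v_j)` (characterized by
`B i j * (1 - u_i v_j) = 1 - c u_i v_j`), then
`det B = V(u) V(v) (1-c)^{n-1} (∑_{m : m_n = 0} s_m(u) s_m(v) + (1-c) ∑_{m : m_n > 0} s_m(u) s_m(v))`,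
stated coefficient-wise, with `V(u) s_m(u) = det (u_j^{m_i+n-i})`. -/
theorem stmt14 (n : ℕ) (hn : 1 ≤ n)
    (B : Matrix (Fin n) (Fin n) (MvPowerSeries (Fin n ⊕ Fin n) (Polynomial ℤ)))
    (hB : ∀ i j, B i j *
        (1 - MvPowerSeries.X (Sum.inl i) * MvPowerSeries.X (Sum.inr j)) =
      1 - (MvPowerSeries.C (σ := Fin n ⊕ Fin n) (R := Polynomial ℤ)) Polynomial.X *
        MvPowerSeries.X (Sum.inl i) * MvPowerSeries.X (Sum.inr j))
    (d : (Fin n ⊕ Fin n) →₀ ℕ) :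
    MvPowerSeries.coeff d B.det =
    MvPowerSeries.coeff d
      ((1 - (MvPowerSeries.C (σ := Fin n ⊕ Fin n) (R := Polynomial ℤ)) Polynomial.X) ^ (n - 1) *
        ((∑ m : Fin n → Fin ((d.sum fun _ e => e) + 1),
          if Antitone (fun i => (m i : ℕ)) ∧ (m ⟨n - 1, by omega⟩ : ℕ) = 0 then
            Matrix.det (Matrix.of fun i j : Fin n =>
              (MvPowerSeries.X (Sum.inl j) :
                MvPowerSeries (Fin n ⊕ Fin n) (Polynomial ℤ)) ^
                ((m i : ℕ) + (n - 1 - (i : ℕ)))) *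
            Matrix.det (Matrix.of fun i j : Fin n =>
              (MvPowerSeries.X (Sum.inr j) :
                MvPowerSeries (Fin n ⊕ Fin n) (Polynomial ℤ)) ^
                ((m i : ℕ) + (n - 1 - (i : ℕ))))
          else 0) +
        (1 - (MvPowerSeries.C (σ := Fin n ⊕ Fin n) (R := Polynomial ℤ)) Polynomial.X) *
        (∑ m : Fin n → Fin ((d.sum fun _ e => e) + 1),
          if Antitone (fun i => (m i : ℕ)) ∧ 0 < (m ⟨n - 1, by omega⟩ : ℕ) then
            Matrix.det (Matrix.of fun i j : Fin n =>
              (MvPowerSeries.X (Sum.inl j) :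
                MvPowerSeries (Fin n ⊕ Fin n) (Polynomial ℤ)) ^
                ((m i : ℕ) + (n - 1 - (i : ℕ)))) *
            Matrix.det (Matrix.of fun i j : Fin n =>
              (MvPowerSeries.X (Sum.inr j) :
                MvPowerSeries (Fin n ⊕ Fin n) (Polynomial ℤ)) ^
                ((m i : ℕ) + (n - 1 - (i : ℕ))))
          else 0))) := by
  obtain ⟨n, rfl⟩ := Nat.exists_eq_add_of_le' hn
  have hlast : (⟨n + 1 - 1, by omega⟩ : Fin (n + 1)) = Fin.last n :=
    Fin.ext (Nat.add_sub_cancel n 1)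
  set c : MvPowerSeries (Fin (n + 1) ⊕ Fin (n + 1)) (Polynomial ℤ) := C Polynomial.X
  let φ (k : Fin (n + 1) → ℕ) : Polynomial ℤ :=
    coeff d ((1 - c) ^ n * frobeniusCoeff c (k (Fin.last n)) *
      ((of fun i j => X (Sum.inl j) ^ k i).det * (of fun i j => X (Sum.inr j) ^ k i).det))
  have hφ : ∀ k i, d.degree < k i → φ k = 0 := fun k i hk =>
    coeff_eq_zero_of_mem_lowCoeffIdeal <| Ideal.mul_mem_left _ _ <| Ideal.mul_mem_right _ _ <|
      det_mem_of_row_mem _ i fun j => X_pow_mem_lowCoeffIdeal _ hk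
  rw [show (d.sum fun _ e => e) = d.degree from rfl,
    coeff_det_eq_coeff_det_frobeniusKernelTrunc Sum.inl Sum.inr Polynomial.X hB,
    det_frobeniusKernelTrunc, map_sum, ← sum_antitone_eq_sum_strictAnti φ hφ, hlast,
    sum_ite_add_one_sub_mul_sum_ite, Nat.add_sub_cancel, mul_sum, map_sum]
  refine sum_congr rfl fun m _ => ?_
  split_ifs <;> simp [φ, mul_assoc]
end

section
/- Loewner's derivative formula (power series form): for n ≥ 2, a formal power series f(t) = Σ_{M≥0} f_M t^M, and u ∈ R^n, the lowest-order term of Δ(t) := det(f(t u_i u_j))_{i,j=1}^n is t^{C(n,2)} · ∏_{i<j}(u_j − u_i)^2 · f_0 f_1 ··· f_{n−1}; i.e., the coefficient of t^k in Δ(t) vanishes for 0 ≤ k < C(n,2), and the coefficient of t^{C(n,2)} equals ∏_{i<j}(u_j − u_i)^2 · ∏_{M=0}^{n−1} f_M. -/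
/-!
Expanding the determinant multilinearly, the coefficient of `t^k` in
`det (f (t x_i y_j))` is a sum over exponent vectors `l` with `∑ l_j = k` of
`∏_j f_{l_j} y_j^{l_j}` times the generalized Vandermonde determinant `det (x_i ^ l_j)`.
That determinant vanishes unless `l` is injective, and an injective `l` has
`∑ l_j ≥ 0 + 1 + ⋯ + (n - 1) = C(n,2)`, with equality exactly when `l` is a permutation of
`(0, …, n - 1)`. The surviving terms add up to `f_0 ⋯ f_{n-1} · det V(x) · det V(y)`.
-/

open Finset PowerSeries

theorem Finset.eq_range_card_or_sum_range_card_lt_sum (s : Finset ℕ) :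
    s = range #s ∨ ∑ i ∈ range #s, i < ∑ i ∈ s, i := by
  induction s using Finset.induction_on_max with
  | empty => simp
  | insert a s hlt ih =>
    have has : a ∉ s := fun h => lt_irrefl a (hlt a h)
    have hcard : #s ≤ a := by
      simpa using card_le_card fun x hx => mem_range.mpr (hlt x hx)
    rw [card_insert_of_notMem has, sum_range_succ, sum_insert has]
    rcases ih with hs | hs
    · rcases hcard.eq_or_lt with rfl | hlt'
      · left
        rw [range_add_one, ← hs]
      · right
        rw [← hs]
        omega
    · right
      omega

theorem Finset.sum_range_id_eq_choose_two (n : ℕ) : ∑ i ∈ range n, i = n.choose 2 := by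
  rw [sum_range_id, Nat.choose_two_right]

theorem image_eq_range_or_choose_two_lt_sum_of_injective {ι : Type*} [Fintype ι]
    [DecidableEq ι] {l : ι → ℕ} (hl : Function.Injective l) :
    univ.image l = range (Fintype.card ι) ∨ (Fintype.card ι).choose 2 < ∑ i, l i := by
  have hcard : #(univ.image l) = Fintype.card ι := card_image_of_injective _ hl
  have hsum : ∑ m ∈ univ.image l, m = ∑ i, l i := sum_image hl.injOn
  rw [← hsum, ← sum_range_id_eq_choose_two, ← hcard]
  exact (univ.image l).eq_range_card_or_sum_range_card_lt_sum

theorem choose_two_le_sum_of_injective {ι : Type*} [Fintype ι] {l : ι → ℕ}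
    (hl : Function.Injective l) : (Fintype.card ι).choose 2 ≤ ∑ i, l i := by
  classical
  rcases image_eq_range_or_choose_two_lt_sum_of_injective hl with h | h
  · have hsum : ∑ m ∈ univ.image l, m = ∑ i, l i := sum_image hl.injOn
    rw [← hsum, h, sum_range_id_eq_choose_two]
  · exact h.le

theorem exists_perm_eq_val_comp_of_injective_of_sum_eq {n : ℕ} {l : Fin n → ℕ}
    (hl : Function.Injective l) (hsum : ∑ i, l i = n.choose 2) :
    ∃ σ : Equiv.Perm (Fin n), l = Fin.val ∘ σ := by
  have hrange : univ.image l = range n := by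
    simpa [hsum] using image_eq_range_or_choose_two_lt_sum_of_injective hl
  have hlt (i : Fin n) : l i < n := mem_range.mp (hrange ▸ mem_image_of_mem l (mem_univ i))
  exact ⟨Equiv.ofBijective (fun i => ⟨l i, hlt i⟩)
    (Finite.injective_iff_bijective.mp fun i j h => hl (congrArg Fin.val h)), rfl⟩

section

variable {R ι : Type*} [CommRing R] [Fintype ι] [DecidableEq ι]

theorem Matrix.det_of_pow_eq_zero_of_not_injective (x : ι → R) {l : ι → ℕ}
    (hl : ¬Function.Injective l) : (Matrix.of fun i j => x i ^ l j).det = 0 := by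
  obtain ⟨a, b, hab, hne⟩ := Function.not_injective_iff.mp hl
  exact Matrix.det_zero_of_column_eq hne fun i => by simp [hab]

theorem Matrix.det_of_pow_val_perm {n : ℕ} (x : Fin n → R) (σ : Equiv.Perm (Fin n)) :
    (Matrix.of fun i j => x i ^ (σ j : ℕ)).det =
      Equiv.Perm.sign σ * (Matrix.vandermonde x).det :=
  Matrix.det_permute' σ (Matrix.vandermonde x)

theorem Matrix.sum_perm_sign_mul_prod_pow_val {n : ℕ} (x : Fin n → R) :
    ∑ σ : Equiv.Perm (Fin n), (Equiv.Perm.sign σ : R) * ∏ i, x i ^ (σ i : ℕ) =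
      (Matrix.vandermonde x).det := by
  rw [← Matrix.det_transpose, Matrix.det_apply']
  rfl

theorem PowerSeries.coeff_det_mk_mul_mul_pow (f : ℕ → R) (x y : ι → R) (k : ℕ) :
    coeff k (Matrix.of fun i j => mk fun M => f M * (x i * y j) ^ M).det =
      ∑ l ∈ finsuppAntidiag univ k,
        (∏ j, f (l j) * y j ^ l j) * (Matrix.of fun i j => x i ^ l j).det := by
  simp only [Matrix.det_apply, map_sum, Units.smul_def, map_zsmul, coeff_prod, Matrix.of_apply,
    coeff_mk, smul_sum, mul_sum]
  rw [sum_comm]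
  refine sum_congr rfl fun l _ => sum_congr rfl fun σ _ => ?_
  rw [mul_smul_comm, ← prod_mul_distrib]
  congr 1
  exact prod_congr rfl fun j _ => by ring

theorem PowerSeries.coeff_det_mk_mul_mul_pow_eq_zero_of_lt (f : ℕ → R) (x y : ι → R)
    {k : ℕ} (hk : k < (Fintype.card ι).choose 2) :
    coeff k (Matrix.of fun i j => mk fun M => f M * (x i * y j) ^ M).det = 0 := by
  rw [coeff_det_mk_mul_mul_pow]
  refine sum_eq_zero fun l hl => ?_
  have hl_sum : ∑ i, l i = k := (mem_finsuppAntidiag.mp hl).1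
  have hl_not_inj : ¬Function.Injective l := fun hinj =>
    (choose_two_le_sum_of_injective hinj).not_gt (hl_sum ▸ hk)
  rw [Matrix.det_of_pow_eq_zero_of_not_injective x hl_not_inj, mul_zero]

theorem PowerSeries.coeff_choose_two_det_mk_mul_mul_pow {n : ℕ} (f : ℕ → R)
    (x y : Fin n → R) :
    coeff (n.choose 2) (Matrix.of fun i j => mk fun M => f M * (x i * y j) ^ M).det =
      (Matrix.vandermonde x).det * (Matrix.vandermonde y).det * ∏ M ∈ range n, f M := by
  let e : Equiv.Perm (Fin n) → (Fin n →₀ ℕ) :=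
    fun σ => Finsupp.equivFunOnFinite.symm (Fin.val ∘ σ)
  have he_apply (σ : Equiv.Perm (Fin n)) (i : Fin n) : e σ i = σ i := rfl
  rw [coeff_det_mk_mul_mul_pow, ← Matrix.sum_perm_sign_mul_prod_pow_val y, mul_sum, sum_mul]
  symm
  refine sum_of_injOn e (fun σ _ τ _ h => ?_) (fun σ _ => ?_) (fun l hl hle => ?_)
    (fun σ _ => ?_)
  · ext i
    simpa [he_apply] using DFunLike.congr_fun h i
  · refine mem_finsuppAntidiag.mpr ⟨?_, subset_univ _⟩
    calc ∑ i, e σ i = ∑ i : Fin n, (i : ℕ) := Equiv.sum_comp σ (fun i => (i : ℕ))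
      _ = n.choose 2 := (Fin.sum_univ_eq_sum_range id n).trans (sum_range_id_eq_choose_two n)
  · by_cases hl_inj : Function.Injective l
    · obtain ⟨σ, hσ⟩ :=
        exists_perm_eq_val_comp_of_injective_of_sum_eq hl_inj (mem_finsuppAntidiag.mp hl).1
      exact absurd ⟨σ, mem_coe.2 (mem_univ σ), Finsupp.ext fun i => (congrFun hσ i).symm⟩ hle
    · rw [Matrix.det_of_pow_eq_zero_of_not_injective x hl_inj, mul_zero]
  · simp only [he_apply]
    rw [Matrix.det_of_pow_val_perm, prod_mul_distrib, Equiv.prod_comp σ (fun i => f i),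
      ← Fin.prod_univ_eq_prod_range]
    ring

end

theorem stmt15_general (R : Type*) [CommRing R] (n : ℕ)
    (u : Fin n → R) (fc : ℕ → R) :
    (∀ k : ℕ, k < n.choose 2 →
      (PowerSeries.coeff (R := R) k)
        (Matrix.det (Matrix.of fun i j : Fin n =>
          PowerSeries.mk fun M => fc M * (u i * u j) ^ M)) = 0) ∧
    (PowerSeries.coeff (R := R) (n.choose 2))
        (Matrix.det (Matrix.of fun i j : Fin n =>
          PowerSeries.mk fun M => fc M * (u i * u j) ^ M)) =
      (∏ i : Fin n, ∏ j ∈ Finset.Ioi i, (u j - u i) ^ 2) *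
      ∏ M ∈ Finset.range n, fc M := by
  refine ⟨fun k hk => coeff_det_mk_mul_mul_pow_eq_zero_of_lt fc u u (by rwa [Fintype.card_fin]),
    ?_⟩
  rw [coeff_choose_two_det_mk_mul_mul_pow, Matrix.det_vandermonde, ← sq]
  simp only [prod_pow]

/-- Loewner's formula (power series form): for `n ≥ 2`, `u ∈ R^n`, and
`Δ(t) = det (f(t u_i u_j))_{i,j}` with `f(t) = ∑_M f_M t^M`, the coefficient of `t^k`
in `Δ` vanishes for `k < C(n,2)`, and the coefficient of `t^{C(n,2)}` equals
`∏_{i<j} (u_j - u_i)^2 · f_0 f_1 ⋯ f_{n-1}`. -/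
theorem stmt15 (R : Type*) [CommRing R] (n : ℕ) (hn : 2 ≤ n)
    (u : Fin n → R) (fc : ℕ → R) :
    (∀ k : ℕ, k < n.choose 2 →
      (PowerSeries.coeff (R := R) k)
        (Matrix.det (Matrix.of fun i j : Fin n =>
          PowerSeries.mk fun M => fc M * (u i * u j) ^ M)) = 0) ∧
    (PowerSeries.coeff (R := R) (n.choose 2))
        (Matrix.det (Matrix.of fun i j : Fin n =>
          PowerSeries.mk fun M => fc M * (u i * u j) ^ M)) =
      (∏ i : Fin n, ∏ j ∈ Finset.Ioi i, (u j - u i) ^ 2) *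
      ∏ M ∈ Finset.range n, fc M :=
  stmt15_general R n u fc
end
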